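/- arXiv:1704.08496 — 6 statements merged into one kernel-verified Lean document; each statement's English description precedes it below -/
import Mathlib

section
/- For every integer N ≥ 1 and real α with 0 < α < 1, the Abelian distribution sums to one: ∑_{L=1}^{N} C_{α,N} · binom(N,L) · (Lα/N)^{L-1} · (1 - Lα/N)^{N-L-1} = 1, where C_{α,N} = (1-α)/(N-(N-1)α). -/
open Finset

section AbelianAux
open Polynomial fwdDiff


lemma fwdDiff_pow_eq_zero : ∀ d n : ℕ, d < n → (Δ_[(1:ℝ)])^[n] (fun t : ℝ => t^d) = 0 := by
  intro d
  induction d using Nat.strong_induction_on with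
  | _ d ih =>
    intro n hd
    obtain ⟨m, rfl⟩ : ∃ m, n = m + 1 := ⟨n-1, by omega⟩
    rw [Function.iterate_succ_apply]
    have hΔ : fwdDiff (1:ℝ) (fun t : ℝ => t^d) = ∑ i ∈ range d, (d.choose i : ℝ) • fun t : ℝ => t^i := by
      funext t
      simp only [fwdDiff, Finset.sum_apply, Pi.smul_apply, smul_eq_mul]
      rw [add_pow]
      rw [Finset.sum_range_succ]
      simp [mul_comm]
    rw [hΔ, fwdDiff_iter_finset_sum]
    rw [Finset.sum_eq_zero]
    intro i hi
    have hi' := Finset.mem_range.mp hi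
    rw [fwdDiff_iter_const_smul, ih i hi' m (by omega)]
    simp

lemma findiff (n d : ℕ) (hd : d < n) :
    ∑ k ∈ range (n+1), (-1:ℝ)^(n-k) * (n.choose k) * (k:ℝ)^d = 0 := by
  have h := fwdDiff_iter_eq_sum_shift (1:ℝ) (fun t : ℝ => t^d) n 0
  rw [fwdDiff_pow_eq_zero d n hd] at h
  simp only [Pi.zero_apply, zsmul_eq_mul, nsmul_eq_mul, mul_one, zero_add] at h
  rw [← h.symm]
  push_cast
  apply Finset.sum_congr rfl
  intro k _
  ring

lemma keyD : ∀ n : ℕ, 1 ≤ n → ∀ y : ℝ,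
    ∑ k ∈ Finset.Icc 1 n, (n.choose k : ℝ) * (k:ℝ)^(k-1) * (y + ((n:ℝ) - k))^(n-k)
      = n * (y + n)^(n-1) := by
  intro n
  induction n with
  | zero => omega
  | succ n ih =>
    intro _ y
    by_cases hn : n = 0
    · subst hn
      norm_num
    have hn1 : 1 ≤ n := by omega
    -- the polynomial (in the variable y) given by LHS - RHS
    set q : Polynomial ℝ := (∑ k ∈ Finset.Icc 1 (n+1),
        C (((n+1).choose k : ℝ) * (k:ℝ)^(k-1)) * (X + C (((n:ℝ)+1) - k))^(n+1-k)) -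
        C ((n:ℝ)+1) * (X + C ((n:ℝ)+1))^n with hq
    have hder : derivative q = (∑ k ∈ Finset.Icc 1 (n+1),
        C (((n+1).choose k : ℝ) * (k:ℝ)^(k-1) * ((n+1-k : ℕ) : ℝ)) * (X + C (((n:ℝ)+1) - k))^(n-k)) -
        C (((n:ℝ)+1) * n) * (X + C ((n:ℝ)+1))^(n-1) := by
      rw [hq, derivative_sub, derivative_sum]
      congr 1
      · apply Finset.sum_congr rfl
        intro k hk
        obtain ⟨hk1, hk2⟩ := Finset.mem_Icc.mp hk
        rw [derivative_mul, derivative_C, derivative_pow, derivative_add, derivative_X,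
          derivative_C, zero_mul, zero_add, add_zero]
        rw [show n + 1 - k - 1 = n - k by omega]
        simp only [map_mul]
        ring
      · rw [derivative_mul, derivative_C, derivative_pow, derivative_add, derivative_X,
          derivative_C, zero_mul, zero_add, add_zero]
        simp only [map_mul]
        ring
    have hzero : (∑ k ∈ Finset.Icc 1 (n+1),
        C (((n+1).choose k : ℝ) * (k:ℝ)^(k-1) * ((n+1-k : ℕ) : ℝ)) * (X + C (((n:ℝ)+1) - k))^(n-k)) -
        C (((n:ℝ)+1) * n) * (X + C ((n:ℝ)+1))^(n-1) = 0 := by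
      apply Polynomial.funext
      intro t
      simp only [eval_sub, eval_finset_sum, eval_mul, eval_pow, eval_add, eval_X, eval_C,
        eval_zero]
      rw [Finset.sum_Icc_succ_top (by omega : 1 ≤ n + 1)]
      rw [show n + 1 - (n+1) = 0 by omega]
      push_cast
      norm_num
      have hstep : ∀ k ∈ Finset.Icc 1 n,
          ((n+1).choose k : ℝ) * (k:ℝ)^(k-1) * ((n+1-k : ℕ) : ℝ) * (t + ((n:ℝ)+1 - k))^(n-k)
          = ((n:ℝ)+1) * ((n.choose k : ℝ) * (k:ℝ)^(k-1) * ((t+1) + ((n:ℝ) - k))^(n-k)) := by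
        intro k hk
        obtain ⟨hk1, hk2⟩ := Finset.mem_Icc.mp hk
        have hch : (n+1-k) * ((n+1).choose k) = (n+1) * (n.choose k) :=
          calc (n+1-k) * ((n+1).choose k) = (n+1).choose k * (n+1-k) := Nat.mul_comm _ _
          _ = (n+1).choose (k+1) * (k+1) := (Nat.choose_succ_right_eq (n+1) k).symm
          _ = (n+1) * (n.choose k) := (Nat.add_one_mul_choose_eq n k).symm
        have hb : (t + ((n:ℝ)+1 - k)) = ((t+1) + ((n:ℝ) - k)) := by ring
        have hc : (((n+1).choose k : ℕ) : ℝ) * ((n+1-k : ℕ) : ℝ) = ((n:ℝ)+1) * (n.choose k) := by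
          rw [← Nat.cast_mul, Nat.mul_comm, hch]
          push_cast; ring
        rw [hb, show ((n+1).choose k : ℝ) * (k:ℝ)^(k-1) * ((n+1-k : ℕ) : ℝ) * ((t+1) + ((n:ℝ) - k))^(n-k)
            = (((n+1).choose k : ℕ) : ℝ) * ((n+1-k : ℕ) : ℝ) * ((k:ℝ)^(k-1) * ((t+1) + ((n:ℝ) - k))^(n-k)) from by ring,
          hc]
        ring
      rw [Finset.sum_congr rfl hstep, ← Finset.mul_sum, ih hn1 (t+1)]
      ring
    have hconst := Polynomial.eq_C_of_derivative_eq_zero (hder.trans hzero)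
    have heval : q.eval (-((n:ℝ)+1)) = 0 := by
      rw [hq]
      simp only [eval_sub, eval_finset_sum, eval_mul, eval_pow, eval_add, eval_X, eval_C]
      rw [show (-((n:ℝ)+1) + ((n:ℝ)+1)) = 0 from by ring, zero_pow hn, mul_zero, sub_zero]
      have hfd := findiff (n+1) n (by omega)
      have hins : range (n+1+1) = insert 0 (Finset.Icc 1 (n+1)) := by
        ext m; simp [Finset.mem_range, Finset.mem_Icc]; omega
      rw [hins, Finset.sum_insert (by simp)] at hfd
      rw [show ((0:ℕ):ℝ)^n = 0 from by rw [Nat.cast_zero]; exact zero_pow hn] at hfd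
      rw [mul_zero, zero_add] at hfd
      rw [← hfd]
      apply Finset.sum_congr rfl
      intro k hk
      obtain ⟨hk1, hk2⟩ := Finset.mem_Icc.mp hk
      have hkk : (k:ℝ)^(k-1) * (k:ℝ)^(n+1-k) = (k:ℝ)^n := by
        rw [← pow_add]; congr 1; omega
      calc ((n+1).choose k : ℝ) * (k:ℝ)^(k-1) * (-((n:ℝ)+1) + ((n:ℝ)+1 - k))^(n+1-k)
          = ((n+1).choose k : ℝ) * ((k:ℝ)^(k-1) * (k:ℝ)^(n+1-k)) * (-1:ℝ)^(n+1-k) := by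
            rw [show (-((n:ℝ)+1) + ((n:ℝ)+1 - k)) = -(k:ℝ) from by ring, neg_pow]; ring
        _ = (-1:ℝ)^(n+1-k) * ((n+1).choose k : ℝ) * (k:ℝ)^n := by rw [hkk]; ring
    have hq0 : q = 0 := by
      rw [hconst] at heval ⊢
      rw [eval_C] at heval
      rw [heval, map_zero]
    have := congrArg (fun p : Polynomial ℝ => p.eval y) hq0
    rw [hq] at this
    simp only [eval_sub, eval_finset_sum, eval_mul, eval_pow, eval_add, eval_X, eval_C,
      eval_zero] at this
    rw [sub_eq_zero] at this
    push_cast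
    exact this

end AbelianAux

theorem abelian_sums_to_one (N : ℕ) (hN : 1 ≤ N) (α : ℝ) (hα0 : 0 < α) (hα1 : α < 1) :
    ∑ L ∈ Finset.Icc 1 N,
      ((1 - α) / (N - (N - 1) * α)) * (N.choose L) *
        (L * α / N) ^ (L - 1) * (1 - L * α / N) ^ ((N : ℤ) - L - 1) = 1 := by
  have hα : α ≠ 0 := ne_of_gt hα0
  have h1α : (1:ℝ) - α ≠ 0 := ne_of_gt (by linarith)
  obtain ⟨M, rfl⟩ : ∃ M, N = M + 1 := ⟨N - 1, by omega⟩
  by_cases hM : M = 0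
  · subst hM
    rw [Finset.Icc_self, Finset.sum_singleton]
    push_cast
    norm_num
    field_simp
  · have hM1 : 1 ≤ M := by omega
    have hNne : ((M:ℝ)+1) ≠ 0 := by positivity
    set y : ℝ := ((M:ℝ)+1)*(1-α)/α with hy_def
    have h1α' : (0:ℝ) < 1 - α := by linarith
    have hy : 0 < y := by rw [hy_def]; positivity
    have hyne : y ≠ 0 := ne_of_gt hy
    have hyN : y + ((M:ℝ)+1) = ((M:ℝ)+1)/α := by
      rw [hy_def]; field_simp; ring
    -- the sum without the normalizing constant
    set S1 : ℝ := ∑ L ∈ Finset.Icc 1 M,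
      (((M+1).choose L : ℝ) * (L:ℝ)^(L-1) * (y + (((M:ℝ)+1) - (L:ℝ)))^(M-L)) with hS1
    -- Step 1: Hurwitz-type identity for y * S1, from keyD at M+1 and M
    have hD1 := keyD (M+1) (by omega) y
    push_cast at hD1
    rw [Finset.sum_Icc_succ_top (by omega : 1 ≤ M + 1)] at hD1
    simp only [Nat.choose_self, Nat.cast_one, Nat.add_sub_cancel, Nat.sub_self, pow_zero,
      one_mul, mul_one] at hD1
    have hrw : ∀ k ∈ Finset.Icc 1 M,
        ((M+1).choose k : ℝ) * (k:ℝ)^(k-1) * (y + ((M:ℝ)+1 - (k:ℝ)))^(M+1-k)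
        = y * (((M+1).choose k : ℝ) * (k:ℝ)^(k-1) * (y + (((M:ℝ)+1) - (k:ℝ)))^(M-k))
          + ((M:ℝ)+1) * ((M.choose k : ℝ) * (k:ℝ)^(k-1) * ((y+1) + ((M:ℝ) - (k:ℝ)))^(M-k)) := by
      intro k hk
      obtain ⟨hk1, hk2⟩ := Finset.mem_Icc.mp hk
      have hch : (M+1-k) * ((M+1).choose k) = (M+1) * (M.choose k) :=
        calc (M+1-k) * ((M+1).choose k) = (M+1).choose k * (M+1-k) := Nat.mul_comm _ _
        _ = (M+1).choose (k+1) * (k+1) := (Nat.choose_succ_right_eq (M+1) k).symm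
        _ = (M+1) * (M.choose k) := (Nat.add_one_mul_choose_eq M k).symm
      have hc : (((M+1).choose k : ℕ) : ℝ) * (((M:ℝ)+1) - (k:ℝ)) = ((M:ℝ)+1) * ((M.choose k : ℕ) : ℝ) := by
        have hcast : ((M+1-k : ℕ) : ℝ) = ((M:ℝ)+1) - (k:ℝ) := by
          rw [Nat.cast_sub (by omega)]; push_cast; ring
        rw [← hcast, ← Nat.cast_mul, Nat.mul_comm, hch]
        push_cast; ring
      rw [show M+1-k = (M-k)+1 from by omega, pow_succ]
      have hbase : (y+1) + ((M:ℝ) - (k:ℝ)) = y + (((M:ℝ)+1) - (k:ℝ)) := by ring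
      rw [hbase]
      linear_combination ((k:ℝ)^(k-1) * (y + (((M:ℝ)+1) - (k:ℝ)))^(M-k)) * hc
    rw [Finset.sum_congr rfl hrw, Finset.sum_add_distrib, ← Finset.mul_sum, ← Finset.mul_sum,
      keyD M hM1 (y+1)] at hD1
    have hS' : y * S1 = ((M:ℝ)+1)*(y+((M:ℝ)+1))^M - ((M:ℝ)+1)*((M:ℝ)*((y+1)+(M:ℝ))^(M-1))
        - (↑(M+1):ℝ)^M := by
      rw [hS1]
      push_cast at hD1 ⊢
      linarith [hD1]
    -- Step 2: rewrite each term of the main sum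
    have hMM : M - 1 + 1 = M := by omega
    have epow : ∀ a : ℝ, a^M = a^(M-1) * a := fun a => by rw [← pow_succ, hMM]
    have hterm : ∀ L ∈ Finset.Icc 1 M,
        (((M+1).choose L : ℝ) * ((L:ℝ) * α / ((M+1:ℕ):ℝ))^(L-1) *
          (1 - (L:ℝ)*α/((M+1:ℕ):ℝ))^(((M+1:ℕ):ℤ) - (L:ℤ) - 1))
        = (α/((M:ℝ)+1))^(M-1) *
            (((M+1).choose L : ℝ) * (L:ℝ)^(L-1) * (y + (((M:ℝ)+1) - (L:ℝ)))^(M-L)) := by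
      intro L hk
      obtain ⟨hk1, hk2⟩ := Finset.mem_Icc.mp hk
      rw [show (((M+1:ℕ):ℤ) - (L:ℤ) - 1) = ((M - L : ℕ) : ℤ) from by
        rw [Nat.cast_sub (by omega)]; push_cast; ring, zpow_natCast]
      push_cast
      have hbase : (1 - (L:ℝ)*α/((M:ℝ)+1)) = (α/((M:ℝ)+1)) * (y + (((M:ℝ)+1) - (L:ℝ))) := by
        rw [hy_def]; field_simp; ring
      rw [hbase, show ((L:ℝ)*α/((M:ℝ)+1)) = (L:ℝ) * (α/((M:ℝ)+1)) from by ring,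
        mul_pow, mul_pow]
      calc ((M+1).choose L : ℝ) * ((L:ℝ)^(L-1) * (α/((M:ℝ)+1))^(L-1)) *
            ((α/((M:ℝ)+1))^(M-L) * (y + (((M:ℝ)+1) - (L:ℝ)))^(M-L))
          = ((α/((M:ℝ)+1))^(L-1) * (α/((M:ℝ)+1))^(M-L)) *
            (((M+1).choose L : ℝ) * (L:ℝ)^(L-1) * (y + (((M:ℝ)+1) - (L:ℝ)))^(M-L)) := by ring
        _ = (α/((M:ℝ)+1))^(M-1) *
            (((M+1).choose L : ℝ) * (L:ℝ)^(L-1) * (y + (((M:ℝ)+1) - (L:ℝ)))^(M-L)) := by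
            rw [← pow_add, show (L-1)+(M-L) = M-1 from by omega]
    -- Step 3: total of the unnormalized sum
    have hT : ∑ L ∈ Finset.Icc 1 (M+1),
        (((M+1).choose L : ℝ) * ((L:ℝ) * α / ((M+1:ℕ):ℝ))^(L-1) *
          (1 - (L:ℝ)*α/((M+1:ℕ):ℝ))^(((M+1:ℕ):ℤ) - (L:ℤ) - 1))
        = (((M:ℝ)+1) - (M:ℝ)*α)/(1-α) := by
      rw [Finset.sum_Icc_succ_top (by omega : 1 ≤ M + 1)]
      rw [Finset.sum_congr rfl hterm, ← Finset.mul_sum, ← hS1]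
      have htop : (((M+1).choose (M+1) : ℝ) * (((M+1:ℕ):ℝ) * α / ((M+1:ℕ):ℝ))^(M+1-1) *
          (1 - ((M+1:ℕ):ℝ)*α/((M+1:ℕ):ℝ))^(((M+1:ℕ):ℤ) - ((M+1:ℕ):ℤ) - 1)) = α^M * (1-α)⁻¹ := by
        rw [Nat.choose_self, Nat.add_sub_cancel,
          show (((M+1:ℕ):ℝ) * α / ((M+1:ℕ):ℝ)) = α from by
            rw [mul_comm, mul_div_assoc, div_self (by push_cast; exact hNne), mul_one],
          show (((M+1:ℕ):ℤ) - ((M+1:ℕ):ℤ) - 1) = -1 from by ring, zpow_neg_one]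
        norm_num
      rw [htop]
      -- Step 4: the main computation
      apply mul_left_cancel₀ hyne
      have e0 : (α/((M:ℝ)+1)) * (((M:ℝ)+1)/α) = 1 := by field_simp
      have e1 : (α/((M:ℝ)+1))^(M-1) * ((((M:ℝ)+1)/α))^M = ((M:ℝ)+1)/α := by
        rw [epow (((M:ℝ)+1)/α), ← mul_assoc, ← mul_pow, e0, one_pow, one_mul]
      have e2 : (α/((M:ℝ)+1))^(M-1) * ((M:ℝ)+1)^M = α^(M-1) * ((M:ℝ)+1) := by
        rw [epow ((M:ℝ)+1), ← mul_assoc, ← mul_pow,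
          show (α/((M:ℝ)+1)) * ((M:ℝ)+1) = α from by field_simp]
      have e3 : (α/((M:ℝ)+1))^(M-1) * ((((M:ℝ)+1)/α))^(M-1) = 1 := by
        rw [← mul_pow, e0, one_pow]
      have hyN2 : (y+1) + (M:ℝ) = ((M:ℝ)+1)/α := by rw [← hyN]; ring
      calc y * ((α/((M:ℝ)+1))^(M-1) * S1 + α^M * (1-α)⁻¹)
          = (α/((M:ℝ)+1))^(M-1) * (y * S1) + y * α^M * (1-α)⁻¹ := by ring
        _ = (α/((M:ℝ)+1))^(M-1) * (((M:ℝ)+1)*(y+((M:ℝ)+1))^M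
              - ((M:ℝ)+1)*((M:ℝ)*((y+1)+(M:ℝ))^(M-1)) - (↑(M+1):ℝ)^M) + y * α^M * (1-α)⁻¹ := by
            rw [hS']
        _ = ((M:ℝ)+1) * ((α/((M:ℝ)+1))^(M-1) * ((((M:ℝ)+1)/α))^M)
              - (((M:ℝ)+1)*(M:ℝ)) * ((α/((M:ℝ)+1))^(M-1) * ((((M:ℝ)+1)/α))^(M-1))
              - ((α/((M:ℝ)+1))^(M-1) * ((M:ℝ)+1)^M) + y * α^M * (1-α)⁻¹ := by
            rw [hyN, hyN2]; push_cast; ring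
        _ = ((M:ℝ)+1) * (((M:ℝ)+1)/α) - (((M:ℝ)+1)*(M:ℝ)) * 1
              - (α^(M-1) * ((M:ℝ)+1)) + y * (α^(M-1) * α) * (1-α)⁻¹ := by
            rw [e1, e2, e3, epow α]
        _ = y * ((((M:ℝ)+1) - (M:ℝ)*α)/(1-α)) := by
            rw [hy_def]; field_simp; ring
    -- Step 5: conclude
    have hden : ((M+1:ℕ):ℝ) - (((M+1:ℕ):ℝ) - 1)*α ≠ 0 := by
      have h1 : (M:ℝ)*α ≤ (M:ℝ) := by
        nlinarith [Nat.cast_nonneg (α := ℝ) M]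
      push_cast
      nlinarith
    calc ∑ L ∈ Finset.Icc 1 (M+1),
        ((1 - α) / (((M+1:ℕ):ℝ) - (((M+1:ℕ):ℝ) - 1) * α)) * (((M+1).choose L : ℝ)) *
          ((L:ℝ) * α / ((M+1:ℕ):ℝ)) ^ (L - 1) *
          (1 - (L:ℝ) * α / ((M+1:ℕ):ℝ)) ^ (((M+1:ℕ) : ℤ) - (L:ℤ) - 1)
        = ((1 - α) / (((M+1:ℕ):ℝ) - (((M+1:ℕ):ℝ) - 1) * α)) *
          ∑ L ∈ Finset.Icc 1 (M+1),
            (((M+1).choose L : ℝ) * ((L:ℝ) * α / ((M+1:ℕ):ℝ))^(L-1) *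
              (1 - (L:ℝ)*α/((M+1:ℕ):ℝ))^(((M+1:ℕ):ℤ) - (L:ℤ) - 1)) := by
          rw [Finset.mul_sum]
          exact Finset.sum_congr rfl (fun L _ => by ring)
      _ = ((1 - α) / (((M+1:ℕ):ℝ) - (((M+1:ℕ):ℝ) - 1) * α)) * ((((M:ℝ)+1) - (M:ℝ)*α)/(1-α)) := by
          rw [hT]
      _ = 1 := by
          rw [div_mul_div_comm, div_eq_one_iff_eq (by
            push_cast at hden ⊢
            intro h
            apply hden
            nlinarith [h])]
          push_cast
          ring
end

section
/- For every integer N ≥ 1 and real x with 0 ≤ x < 1/N, the identity ∑_{L=1}^{N} binom(N-1,L-1) · (Lx)^{L-1} · (1-Lx)^{N-L-1} = 1/(1-Nx) holds. -/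
/-!
Multiply by `1 - N x` and write `1 - N x = (1 - L x) - (N - L) x`. Since
`(N - L) * C(N-1, L-1) = L * C(N-1, L)`, the sum becomes the difference `A(x) - (A(0) - 1)` of two
Abel sums `A(a) = ∑ₖ C(n,k) (a + k x)^k (1 - (a + k x))^(n-k)` with `n = N - 1`. An Abel sum does
not depend on `a`: expanding `(1 - (a + k x))^(n-k)` binomially and regrouping by the total power
`m` of `a + k x`, each group is a multiple of the `m`-th forward difference of the degree-`m`
polynomial `t ↦ (a + t x)^m`, which is `m! x^m`.
-/

open Finset Polynomial Nat fwdDiff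

namespace Polynomial

variable {R : Type*} [CommRing R]

theorem fwdDiff_iter_eq_coeff_mul_factorial (P : R[X]) {m : ℕ} (hP : P.natDegree ≤ m) :
    (Δ_[1])^[m] P.eval = fun _ ↦ P.coeff m * m ! := by
  rcases hP.lt_or_eq with hlt | rfl
  · ext
    simp [fwdDiff_iter_eq_zero_of_degree_lt hlt, coeff_eq_zero_of_natDegree_lt hlt]
  · rw [fwdDiff_iter_degree_eq_factorial]
    rfl

end Polynomial

section CommRing

variable {R : Type*} [CommRing R]

theorem sum_range_alternating_choose_mul_pow (a z : R) (m : ℕ) :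
    ∑ k ∈ range (m + 1), (-1) ^ (m - k) * m.choose k * (a + k * z) ^ m = m ! * z ^ m := by
  set P : R[X] := (C z * X + C a) ^ m
  have hdeg : P.natDegree ≤ m := by
    simpa using natDegree_pow_le_of_le m natDegree_linear_le
  have hcoeff : P.coeff m = z ^ m := by
    simpa using coeff_pow_of_natDegree_le (m := m) (natDegree_linear_le (a := z) (b := a))
  have h := congr_fun (P.fwdDiff_iter_eq_coeff_mul_factorial hdeg) 0
  rw [fwdDiff_iter_eq_sum_shift, hcoeff] at h
  rw [mul_comm, ← h]
  refine sum_congr rfl fun k _ ↦ ?_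
  simp [P, zsmul_eq_mul]
  ring

def abelSum (n : ℕ) (z s a : R) : R :=
  ∑ k ∈ range (n + 1), n.choose k * (a + k * z) ^ k * (s - (a + k * z)) ^ (n - k)

theorem abelSum_eq (n : ℕ) (z s a : R) :
    abelSum n z s a = ∑ m ∈ range (n + 1), n.choose m * m ! * z ^ m * s ^ (n - m) := by
  set b : ℕ → R := fun k ↦ a + k * z
  have expand : ∀ k ∈ range (n + 1), (n.choose k : R) * b k ^ k * (s - b k) ^ (n - k) =
      ∑ j ∈ range (n + 1 - k),
        (n.choose k : R) * (n - k).choose j * (-1) ^ j * b k ^ (k + j) * s ^ (n - k - j) := by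
    intro k hk
    rw [Nat.sub_add_comm (mem_range_succ_iff.1 hk), sub_eq_neg_add, add_pow (-b k) s, mul_sum]
    refine sum_congr rfl fun j _ ↦ ?_
    rw [neg_pow, pow_add]
    ring
  have regroup : ∀ m, ∀ k ∈ range (m + 1),
      (n.choose k : R) * (n - k).choose (m - k) * (-1) ^ (m - k) * b k ^ (k + (m - k)) *
        s ^ (n - k - (m - k)) =
      n.choose m * s ^ (n - m) * ((-1) ^ (m - k) * m.choose k * b k ^ m) := by
    intro m k hk
    have hkm := mem_range_succ_iff.1 hk
    rw [Nat.add_sub_cancel' hkm, Nat.sub_sub, Nat.add_sub_cancel' hkm]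
    have hc : (n.choose k : R) * (n - k).choose (m - k) = n.choose m * m.choose k := by
      rw [← Nat.cast_mul, ← Nat.cast_mul, Nat.choose_mul hkm]
    linear_combination (-1) ^ (m - k) * b k ^ m * s ^ (n - m) * hc
  rw [abelSum, sum_congr rfl expand, ← sum_range_diag_flip]
  refine sum_congr rfl fun m _ ↦ ?_
  rw [sum_congr rfl (regroup m), ← mul_sum, sum_range_alternating_choose_mul_pow]
  ring

end CommRing

section Field

variable {K : Type*} [Field K]

theorem choose_mul_pow_mul_zpow_mul_eq_sub {n k : ℕ} (hk : k ≤ n) {x : K}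
    (hx : 1 - (n + 1) * x ≠ 0) :
    n.choose k * ((k + 1) * x) ^ k * (1 - (k + 1) * x) ^ ((n : ℤ) - k - 1) * (1 - (n + 1) * x) =
      n.choose k * (x + k * x) ^ k * (1 - (x + k * x)) ^ (n - k) -
        n.choose (k + 1) * (0 + ((k + 1 : ℕ) : K) * x) ^ (k + 1) *
          (1 - (0 + ((k + 1 : ℕ) : K) * x)) ^ (n - (k + 1)) := by
  rcases hk.lt_or_eq with hlt | rfl
  · obtain ⟨j, rfl⟩ := Nat.exists_eq_add_of_lt hlt
    have hexp : ((k + j + 1 : ℕ) : ℤ) - k - 1 = (j : ℕ) := by push_cast; ring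
    have hc : ((k + j + 1).choose (k + 1) : K) * (k + 1) = (k + j + 1).choose k * (j + 1) := by
      have := congrArg (Nat.cast : ℕ → K) (Nat.choose_succ_right_eq (k + j + 1) k)
      rw [show k + j + 1 - k = j + 1 by omega] at this
      push_cast at this
      exact this
    rw [hexp, zpow_natCast, show k + j + 1 - k = j + 1 by omega,
      show k + j + 1 - (k + 1) = j by omega]
    push_cast
    linear_combination (((k + 1) * x) ^ k * x * (1 - (k + 1) * x) ^ j) * hc
  · have hexp : (k : ℤ) - k - 1 = -1 := by ring
    rw [hexp, zpow_neg_one, Nat.choose_succ_self, Nat.sub_self]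
    push_cast at hx ⊢
    field_simp
    ring

theorem sum_range_choose_mul_pow_mul_zpow_eq_one_div (n : ℕ) {x : K}
    (hx : 1 - (n + 1) * x ≠ 0) :
    ∑ k ∈ range (n + 1),
      (n.choose k : K) * ((k + 1) * x) ^ k * (1 - (k + 1) * x) ^ ((n : ℤ) - k - 1) =
        1 / (1 - (n + 1) * x) := by
  set g : ℕ → K := fun L ↦ n.choose L * (0 + L * x) ^ L * (1 - (0 + L * x)) ^ (n - L)
  have hg : ∑ k ∈ range (n + 1), g (k + 1) = abelSum n x 1 0 - 1 := by
    have hlast : g (n + 1) = 0 := by simp [g]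
    have hfirst : g 0 = 1 := by simp [g]
    calc ∑ k ∈ range (n + 1), g (k + 1)
        = ∑ L ∈ range (n + 2), g L - g 0 := by rw [sum_range_succ' g (n + 1), add_sub_cancel_right]
      _ = abelSum n x 1 0 - 1 := by rw [sum_range_succ, hlast, hfirst, add_zero]; rfl
  rw [eq_div_iff hx, sum_mul,
    sum_congr rfl fun k hk ↦ choose_mul_pow_mul_zpow_mul_eq_sub (mem_range_succ_iff.1 hk) hx,
    sum_sub_distrib, hg]
  change abelSum n x 1 x - _ = _
  rw [abelSum_eq, abelSum_eq, sub_sub_cancel]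

end Field

theorem abelian_expectation_identity_general (N : ℕ) (hN : 1 ≤ N) (x : ℝ)
    (hx1 : x < 1 / N) :
    ∑ L ∈ Finset.Icc 1 N,
      ((N - 1).choose (L - 1) : ℝ) * (L * x) ^ (L - 1) *
        (1 - L * x) ^ ((N : ℤ) - L - 1) = 1 / (1 - N * x) := by
  obtain ⟨n, rfl⟩ : ∃ n, N = n + 1 := ⟨N - 1, by omega⟩
  have hx : 1 - ((n : ℝ) + 1) * x ≠ 0 := by
    have := (lt_div_iff₀ (by positivity)).1 hx1
    push_cast at this
    linarith
  have hIcc : Icc 1 (n + 1) = (range (n + 1)).map (addRightEmbedding 1) := by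
    rw [Nat.range_succ_eq_Icc_zero, map_add_right_Icc]
  rw [hIcc, sum_map]
  push_cast
  rw [← sum_range_choose_mul_pow_mul_zpow_eq_one_div n hx]
  refine sum_congr rfl fun k _ ↦ ?_
  simp only [addRightEmbedding_apply, Nat.add_sub_cancel]
  push_cast
  rw [add_sub_add_right_eq_sub]

theorem abelian_expectation_identity (N : ℕ) (hN : 1 ≤ N) (x : ℝ)
    (hx0 : 0 ≤ x) (hx1 : x < 1 / N) :
    ∑ L ∈ Finset.Icc 1 N,
      ((N - 1).choose (L - 1) : ℝ) * (L * x) ^ (L - 1) *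
        (1 - L * x) ^ ((N : ℤ) - L - 1) = 1 / (1 - N * x) :=
  abelian_expectation_identity_general N hN x hx1
end

section
/- For every integer i ≥ 0 and every integer N ≥ 1, the combinatorial identity ∑_{k=0}^{i} (-1)^{i-k} · binom(N-1,k) · binom(N-k-2, i-k) · (k+1)^i = N^i holds, where binom(m,j) = 0 when 0 ≤ m < j. -/
/-! The coefficient of `(k + 1) ^ i` is the Lagrange basis polynomial of the nodes
`0, …, i` evaluated at `N - 1`, so the identity is Lagrange interpolation of `x ↦ (x + 1) ^ i`.
Via forward differences: since `Δ^(i+1) f = 0`, the Gregory–Newton expansion of `f n` stops at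
`Δ^i f 0`; each `Δ^j f 0` is an alternating sum of the values `f k`; and collecting the
coefficient of `f k` leaves the partial alternating sum
`∑_{t ≤ i-k} (-1)^t C(n-k, t) = (-1)^(i-k) C(n-k-1, i-k)`. -/

open Finset fwdDiff

theorem Ring.alternating_sum_range_choose_eq_choose {R : Type*} [CommRing R] [BinomialRing R]
    (r : R) (m : ℕ) :
    ∑ t ∈ range (m + 1), (-1 : R) ^ t * choose (r + 1) t = (-1) ^ m * choose r m := by
  induction m with
  | zero => simp
  | succ m ih =>
    rw [sum_range_succ, ih, Ring.choose_succ_succ, pow_succ]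
    ring

theorem Int.sum_range_choose_mul_choose_mul_neg_one_pow {n k d : ℕ} (hkd : k ≤ d) :
    ∑ j ∈ Finset.range (d + 1), (n.choose j * j.choose k * (-1) ^ (j - k) : ℤ) =
      (-1) ^ (d - k) * n.choose k * Ring.choose ((n : ℤ) - k - 1) (d - k) := by
  obtain ⟨e, rfl⟩ := Nat.exists_eq_add_of_le hkd
  have below : ∑ j ∈ Finset.range k, (n.choose j * j.choose k * (-1) ^ (j - k) : ℤ) = 0 :=
    sum_eq_zero fun j hj => by simp [Nat.choose_eq_zero_of_lt (mem_range.1 hj)]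
  have above : ∀ t, (n.choose (k + t) * (k + t).choose k * (-1) ^ (k + t - k) : ℤ) =
      n.choose k * ((-1) ^ t * (n - k).choose t) := fun t => by
    rw [← Nat.cast_mul, Nat.choose_mul (Nat.le_add_right k t), Nat.add_sub_cancel_left,
      Nat.cast_mul]
    ring
  rw [add_assoc, sum_range_add, below, zero_add, Nat.add_sub_cancel_left]
  simp_rw [above, ← mul_sum]
  rcases lt_or_ge n k with hnk | hkn
  · simp [Nat.choose_eq_zero_of_lt hnk]
  · have hcast : ((n - k : ℕ) : ℤ) = (n : ℤ) - k - 1 + 1 := by omega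
    simp_rw [← Ring.choose_natCast (R := ℤ), hcast, Ring.alternating_sum_range_choose_eq_choose]
    ring

theorem fwdDiff_iter_eq_zero_of_le {M G : Type*} [AddCommMonoid M] [AddCommGroup G] {h : M}
    {f : M → G} {d j : ℕ} (hf : Δ_[h] ^[d] f = 0) (hdj : d ≤ j) : Δ_[h] ^[j] f = 0 := by
  obtain ⟨e, rfl⟩ := Nat.exists_eq_add_of_le hdj
  rw [add_comm, Function.iterate_add_apply, hf]
  exact Function.iterate_fixed (fwdDiff_const h 0) e

theorem shift_eq_sum_range_fwdDiff_iter {M G : Type*} [AddCommMonoid M] [AddCommGroup G] {h : M}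
    {f : M → G} {d : ℕ} (hf : Δ_[h] ^[d + 1] f = 0) (n : ℕ) (y : M) :
    f (y + n • h) = ∑ j ∈ range (d + 1), n.choose j • Δ_[h] ^[j] f y := by
  rw [shift_eq_sum_fwdDiff_iter h f n y,
    sum_subset (range_subset_range.2 (by omega : n + 1 ≤ n + d + 1)),
    ← sum_subset (range_subset_range.2 (by omega : d + 1 ≤ n + d + 1))]
  · intro j _ hj
    rw [fwdDiff_iter_eq_zero_of_le hf (by simpa using hj), Pi.zero_apply, smul_zero]
  · intro j _ hj
    rw [Nat.choose_eq_zero_of_lt (by simpa using hj), zero_smul]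

theorem eq_sum_choose_mul_ringChoose_smul_of_fwdDiff_iter_eq_zero {G : Type*} [AddCommGroup G]
    {f : ℤ → G} {d : ℕ} (hf : Δ_[1] ^[d + 1] f = 0) (n : ℕ) :
    f n = ∑ k ∈ range (d + 1),
      ((-1) ^ (d - k) * n.choose k * Ring.choose ((n : ℤ) - k - 1) (d - k)) • f k := by
  have hdiff : ∀ j ∈ range (d + 1), Δ_[1] ^[j] f 0 =
      ∑ k ∈ range (d + 1), ((-1) ^ (j - k) * j.choose k : ℤ) • f k := fun j hj => by
    rw [fwdDiff_iter_eq_sum_shift, sum_subset (range_subset_range.2 (mem_range.1 hj))]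
    · simp
    · intro k _ hk
      rw [Nat.choose_eq_zero_of_lt (by simpa using hk)]
      simp
  calc f n = f (0 + n • 1) := by simp
    _ = ∑ j ∈ range (d + 1), ∑ k ∈ range (d + 1),
          (n.choose j * j.choose k * (-1) ^ (j - k) : ℤ) • f k := by
      rw [shift_eq_sum_range_fwdDiff_iter hf]
      refine sum_congr rfl fun j hj => ?_
      rw [hdiff j hj, smul_sum]
      refine sum_congr rfl fun k _ => ?_
      rw [← Nat.cast_smul_eq_nsmul ℤ, smul_smul]
      ring_nf
    _ = _ := by
      rw [sum_comm]
      refine sum_congr rfl fun k hk => ?_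
      rw [← sum_smul, Int.sum_range_choose_mul_choose_mul_neg_one_pow (mem_range_succ_iff.1 hk)]

theorem abelian_expectation_coefficient_identity (i N : ℕ) (hN : 1 ≤ N) :
    ∑ k ∈ Finset.range (i + 1),
      (-1 : ℤ) ^ (i - k) * ((N - 1).choose k) *
        Ring.choose ((N : ℤ) - k - 2) (i - k) * ((k : ℤ) + 1) ^ i = (N : ℤ) ^ i := by
  have hf : Δ_[1] ^[i + 1] (fun y : ℤ => (y + 1) ^ i) = 0 := funext fun y => by
    rw [fwdDiff_iter_comp_add 1 (· ^ i), fwdDiff_iter_pow_eq_zero_of_lt (Nat.lt_succ_self i)]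
    rfl
  obtain ⟨n, rfl⟩ := Nat.exists_eq_add_of_le' hN
  rw [Nat.add_sub_cancel, Nat.cast_succ,
    eq_sum_choose_mul_ringChoose_smul_of_fwdDiff_iter_eq_zero hf n]
  refine sum_congr rfl fun k _ => ?_
  rw [smul_eq_mul, show (n : ℤ) + 1 - k - 2 = n - k - 1 by ring]
end

section
/- For every integer N ≥ 2, both sides of the equation ∑_{L=1}^{N-1} binom(N-1,L-1) · (Lx)^{L-1} · (1-Lx)^{N-L-1} = ∑_{i=0}^{N-2} (Nx)^i are polynomials in x of degree at most N-2, and they are equal as polynomials. -/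
open Finset Polynomial

lemma findiff_s6 : ∀ (n j : ℕ), j ≤ n → ∀ x : ℝ,
    ∑ k ∈ Finset.range (n+1), (-1:ℝ)^k * (n.choose k) * (x+k)^j
      = if j = n then (-1:ℝ)^n * n.factorial else 0 := by
  intro n
  induction n with
  | zero => intro j hj x; interval_cases j; simp
  | succ n ih =>
    intro j hj x
    have e2 : ∑ k ∈ Finset.range (n+2), (-1:ℝ)^k * (n.choose k) * (x+k)^j
        = ∑ k ∈ Finset.range (n+1), (-1:ℝ)^k * (n.choose k) * (x+k)^j := by
      rw [Finset.sum_range_succ]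
      simp [Nat.choose_succ_self]
    have key : ∑ k ∈ Finset.range (n+2), (-1:ℝ)^k * ((n+1).choose k) * (x+k)^j
        = ∑ k ∈ Finset.range (n+1), (-1:ℝ)^k * (n.choose k) * ((x+k)^j - ((x+1)+k)^j) := by
      simp only [mul_sub, Finset.sum_sub_distrib]
      rw [← e2]
      rw [Finset.sum_range_succ' (fun k => (-1:ℝ)^k * ((n+1).choose k) * (x+k)^j) (n+1)]
      rw [Finset.sum_range_succ' (fun k => (-1:ℝ)^k * (n.choose k) * (x+k)^j) (n+1)]
      have hterm : ∀ k ∈ Finset.range (n+1),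
          (-1:ℝ)^(k+1) * (((n+1).choose (k+1) : ℕ)) * (x+((k+1:ℕ):ℝ))^j
          = ((-1:ℝ)^(k+1) * ((n.choose (k+1) : ℕ)) * (x+((k+1:ℕ):ℝ))^j)
            - ((-1:ℝ)^k * ((n.choose k : ℕ)) * ((x+1)+k)^j) := by
        intro k hk
        rw [Nat.choose_succ_succ]
        have h1 : x + ((k:ℝ)+1) = (x+1) + k := by ring
        push_cast
        rw [h1]
        ring
      rw [Finset.sum_congr rfl hterm, Finset.sum_sub_distrib]
      simp [Nat.choose_zero_right]
      ring
    rw [key]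
    have hbin : ∀ k : ℕ, (x+(k:ℝ))^j - ((x+1)+k)^j
        = - ∑ i ∈ Finset.range j, (x+(k:ℝ))^i * (j.choose i) := by
      intro k
      have hb : ((x+(k:ℝ))+1)^j = ∑ i ∈ Finset.range (j+1), (x+(k:ℝ))^i * 1^(j-i) * (j.choose i) :=
        add_pow (x+(k:ℝ)) 1 j
      rw [Finset.sum_range_succ] at hb
      have h1 : (x+1)+(k:ℝ) = (x+(k:ℝ))+1 := by ring
      rw [h1, hb]
      simp
    calc ∑ k ∈ Finset.range (n+1), (-1:ℝ)^k * (n.choose k) * ((x+k)^j - ((x+1)+k)^j)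
        = ∑ k ∈ Finset.range (n+1), ∑ i ∈ Finset.range j,
            -((j.choose i : ℝ) * ((-1:ℝ)^k * (n.choose k) * (x+k)^i)) := by
          refine Finset.sum_congr rfl fun k _ => ?_
          rw [hbin k, mul_neg, Finset.mul_sum, ← Finset.sum_neg_distrib]
          exact Finset.sum_congr rfl fun i _ => by ring
      _ = ∑ i ∈ Finset.range j,
            -((j.choose i : ℝ) * ∑ k ∈ Finset.range (n+1), (-1:ℝ)^k * (n.choose k) * (x+k)^i) := by
          rw [Finset.sum_comm]
          refine Finset.sum_congr rfl fun i _ => ?_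
          rw [Finset.mul_sum, ← Finset.sum_neg_distrib]
      _ = ∑ i ∈ Finset.range j,
            -((j.choose i : ℝ) * (if i = n then (-1:ℝ)^n * n.factorial else 0)) := by
          refine Finset.sum_congr rfl fun i hi => ?_
          have := Finset.mem_range.mp hi
          rw [ih i (by omega) x]
      _ = if j = n+1 then (-1:ℝ)^(n+1) * (n+1).factorial else 0 := by
          simp only [mul_ite, mul_zero]
          rw [Finset.sum_neg_distrib, Finset.sum_ite_eq' (Finset.range j) n
            (fun i => (j.choose i : ℝ) * ((-1:ℝ)^n * n.factorial))]
          by_cases h : j = n+1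
          · subst h
            simp [Nat.choose_succ_self_right, Nat.factorial_succ]
            ring
          · have hn : n ∉ Finset.range j := by
              simp only [Finset.mem_range]
              omega
            simp [hn, h]

noncomputable def Upoly (n : ℕ) : ℝ[X] :=
  ∑ k ∈ Finset.range (n+1),
    C ((n.choose k : ℝ) * ((k:ℝ)+1)^k) * (X + C ((n:ℝ) - k)) ^ (n - k)

noncomputable def Vpoly (n : ℕ) : ℝ[X] :=
  ∑ j ∈ Finset.range (n+1),
    C ((n.descFactorial j : ℝ)) * (X + C ((n:ℝ) + 1)) ^ (n - j)

lemma deriv_term (a b : ℝ) (m : ℕ) :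
    derivative (C a * (X + C b) ^ m) = C (a * m) * (X + C b) ^ (m-1) := by
  cases m with
  | zero => simp
  | succ m =>
    rw [derivative_C_mul, derivative_pow, derivative_add, derivative_X, derivative_C]
    push_cast
    simp only [add_zero, mul_one, Nat.add_sub_cancel]
    rw [C_mul]
    ring

lemma comp_term (a b : ℝ) (m : ℕ) :
    (C a * (X + C b) ^ m).comp (X + C 1) = C a * (X + C (b + 1)) ^ m := by
  simp only [mul_comp, pow_comp, add_comp, X_comp, C_comp, C_add]
  ring

lemma derivU (n : ℕ) :
    derivative (Upoly (n+1)) = C ((n:ℝ)+1) * (Upoly n).comp (X + C 1) := by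
  unfold Upoly
  rw [derivative_sum, Finset.sum_range_succ, Polynomial.sum_comp, Finset.mul_sum]
  have hlast : derivative (C ((((n+1).choose (n+1) : ℕ) : ℝ) * (((n+1:ℕ):ℝ)+1)^(n+1))
      * (X + C (((n+1:ℕ):ℝ) - (n+1:ℕ))) ^ ((n+1) - (n+1))) = 0 := by
    rw [Nat.sub_self, pow_zero, mul_one, derivative_C]
  rw [hlast, add_zero]
  refine Finset.sum_congr rfl fun k hk => ?_
  have hk' := Finset.mem_range.mp hk
  rw [deriv_term, comp_term]
  have hexp : (n + 1 - k) - 1 = n - k := by omega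
  have hbase : ((n+1:ℕ):ℝ) - k = ((n:ℝ) - k) + 1 := by push_cast; ring
  have hnat : (n+1).choose k * (n + 1 - k) = (n+1) * n.choose k := by
    rw [← Nat.choose_mul_succ_eq n k, Nat.mul_comm]
  have hR := congrArg (Nat.cast : ℕ → ℝ) hnat
  push_cast [Nat.cast_sub (by omega : k ≤ n + 1)] at hR
  have hco : (((n+1).choose k : ℝ) * ((k:ℝ)+1)^k * ((n+1-k : ℕ):ℝ))
      = ((n:ℝ)+1) * ((n.choose k : ℝ) * ((k:ℝ)+1)^k) := by
    push_cast [Nat.cast_sub (by omega : k ≤ n + 1)]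
    linear_combination ((k:ℝ)+1)^k * hR
  rw [hexp, hbase, hco, C_mul, mul_assoc]

lemma derivV (n : ℕ) :
    derivative (Vpoly (n+1)) = C ((n:ℝ)+1) * (Vpoly n).comp (X + C 1) := by
  unfold Vpoly
  rw [derivative_sum, Finset.sum_range_succ, Polynomial.sum_comp, Finset.mul_sum]
  have hlast : derivative (C ((((n+1).descFactorial (n+1) : ℕ) : ℝ))
      * (X + C (((n+1:ℕ):ℝ) + 1)) ^ ((n+1) - (n+1))) = 0 := by
    rw [Nat.sub_self, pow_zero, mul_one, derivative_C]
  rw [hlast, add_zero]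
  refine Finset.sum_congr rfl fun k hk => ?_
  have hk' := Finset.mem_range.mp hk
  rw [deriv_term, comp_term]
  have hexp : (n + 1 - k) - 1 = n - k := by omega
  have hbase : ((n+1:ℕ):ℝ) + 1 = ((n:ℝ) + 1) + 1 := by push_cast; ring
  have hnat : (n+1).descFactorial k * (n + 1 - k) = (n+1) * n.descFactorial k := by
    have h1 : (n+1).descFactorial (k+1) = (n + 1 - k) * (n+1).descFactorial k :=
      Nat.descFactorial_succ (n+1) k
    have h2 : (n+1).descFactorial (k+1) = (n+1) * n.descFactorial k :=
      Nat.succ_descFactorial_succ n k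
    rw [Nat.mul_comm, ← h1, h2]
  have hR := congrArg (Nat.cast : ℕ → ℝ) hnat
  push_cast [Nat.cast_sub (by omega : k ≤ n + 1)] at hR
  have hco : (((n+1).descFactorial k : ℝ) * ((n+1-k : ℕ):ℝ))
      = ((n:ℝ)+1) * ((n.descFactorial k : ℝ)) := by
    push_cast [Nat.cast_sub (by omega : k ≤ n + 1)]
    linear_combination hR
  rw [hexp, hbase, hco, C_mul, mul_assoc]

lemma evalU (n : ℕ) : eval (-(n:ℝ)-1) (Upoly n) = n.factorial := by
  unfold Upoly
  rw [eval_finset_sum]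
  have hterm : ∀ k ∈ Finset.range (n+1),
      eval (-(n:ℝ)-1) (C ((n.choose k : ℝ) * ((k:ℝ)+1)^k) * (X + C ((n:ℝ) - k)) ^ (n - k))
      = (-1:ℝ)^n * ((-1:ℝ)^k * (n.choose k) * ((1:ℝ)+k)^n) := by
    intro k hk
    have hk' := Finset.mem_range.mp hk
    have hb : (-(n:ℝ)-1) + ((n:ℝ) - k) = (-1) * ((1:ℝ)+k) := by ring
    rw [eval_mul, eval_C, eval_pow, eval_add, eval_X, eval_C, hb, mul_pow]
    have f1 : ((1:ℝ)+k)^k * ((1:ℝ)+k)^(n-k) = ((1:ℝ)+k)^n := by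
      rw [← pow_add]
      congr 1
      omega
    have f2 : (-1:ℝ)^(n-k) * (-1:ℝ)^k = (-1:ℝ)^n := by
      rw [← pow_add]
      congr 1
      omega
    have f5 : (-1:ℝ)^k * (-1:ℝ)^k = 1 := by
      rw [← pow_add]
      exact Even.neg_one_pow ⟨k, rfl⟩
    linear_combination ((n.choose k : ℝ) * (-1:ℝ)^(n-k)) * f1
      + ((n.choose k : ℝ) * ((1:ℝ)+(k:ℝ))^n * (-1:ℝ)^k) * f2
      - ((n.choose k : ℝ) * ((1:ℝ)+(k:ℝ))^n * (-1:ℝ)^(n-k)) * f5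
  rw [Finset.sum_congr rfl hterm, ← Finset.mul_sum, findiff_s6 n n le_rfl 1, if_pos rfl,
    ← mul_assoc, ← pow_add, Even.neg_one_pow ⟨n, rfl⟩, one_mul]

lemma evalV (n : ℕ) : eval (-(n:ℝ)-1) (Vpoly n) = n.factorial := by
  unfold Vpoly
  rw [eval_finset_sum]
  have hz : (-(n:ℝ)-1) + ((n:ℝ)+1) = 0 := by ring
  rw [Finset.sum_eq_single n]
  · rw [eval_mul, eval_C, eval_pow, eval_add, eval_X, eval_C, hz, Nat.sub_self, pow_zero,
      mul_one, Nat.descFactorial_self]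
  · intro j hj hjn
    have hj' := Finset.mem_range.mp hj
    rw [eval_mul, eval_C, eval_pow, eval_add, eval_X, eval_C, hz, zero_pow (by omega), mul_zero]
  · intro h
    exact absurd (Finset.self_mem_range_succ n) h

lemma UeqV (n : ℕ) : Upoly n = Vpoly n := by
  induction n with
  | zero =>
    unfold Upoly Vpoly
    simp
  | succ n ih =>
    have hd : derivative (Upoly (n+1) - Vpoly (n+1)) = 0 := by
      rw [derivative_sub, derivU, derivV, ih, sub_self]
    have hC := eq_C_of_derivative_eq_zero hd
    have he : eval (-(((n+1):ℕ):ℝ)-1) (Upoly (n+1) - Vpoly (n+1)) = 0 := by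
      rw [eval_sub, evalU, evalV, sub_self]
    rw [hC, eval_C] at he
    rw [he, map_zero] at hC
    exact sub_eq_zero.mp hC
lemma eval_term (t a b : ℝ) (e : ℕ) : eval t (C a * (X + C b)^e) = a * (t + b)^e := by
  rw [eval_mul, eval_C, eval_pow, eval_add, eval_X, eval_C]

lemma VV (m : ℕ) (y : ℝ) :
    eval y (Vpoly (m+1)) - ((m:ℝ)+1) * eval (y+1) (Vpoly m)
      = (y + ((m:ℝ)+2))^(m+1) := by
  unfold Vpoly
  rw [eval_finset_sum, eval_finset_sum]
  simp only [eval_term]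
  rw [Finset.sum_range_succ' (fun j => (((m+1).descFactorial j : ℕ):ℝ)
    * (y + ((((m+1):ℕ):ℝ)+1))^(m+1-j)) (m+1)]
  rw [Finset.mul_sum]
  have hterm : ∀ j ∈ Finset.range (m+1),
      (((m+1).descFactorial (j+1) : ℕ):ℝ) * (y + ((((m+1):ℕ):ℝ)+1))^(m+1-(j+1))
      = ((m:ℝ)+1) * ((m.descFactorial j : ℕ):ℝ) * ((y+1) + ((m:ℝ)+1))^(m-j) := by
    intro j hj
    have h1 : (m+1).descFactorial (j+1) = (m+1) * m.descFactorial j :=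
      Nat.succ_descFactorial_succ m j
    have h2 : m+1-(j+1) = m - j := by omega
    have h3 : y + ((((m+1):ℕ):ℝ)+1) = (y+1) + ((m:ℝ)+1) := by push_cast; ring
    rw [h1, h2, h3]
    push_cast
    ring
  rw [Finset.sum_congr rfl hterm]
  have h4 : ∀ j ∈ Finset.range (m+1),
      ((m:ℝ)+1) * (((m.descFactorial j : ℕ):ℝ) * ((y+1) + ((m:ℝ)+1))^(m-j))
      = ((m:ℝ)+1) * ((m.descFactorial j : ℕ):ℝ) * ((y+1) + ((m:ℝ)+1))^(m-j) := by
    intro j hj; ring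
  rw [Finset.sum_congr rfl h4, add_sub_cancel_left]
  have h5 : y + ((((m+1):ℕ):ℝ)+1) = y + ((m:ℝ)+2) := by push_cast; ring
  rw [Nat.descFactorial_zero, Nat.sub_zero, h5]
  norm_num

lemma main_eval (m : ℕ) (x : ℝ) (hx : x ≠ 0) (hNx : (((m:ℝ))+2)*x ≠ 1) :
    ∑ k ∈ Finset.range (m+1),
        (((m+1).choose k : ℕ):ℝ) * (((k:ℝ)+1)*x)^k * (1 - ((k:ℝ)+1)*x)^(m-k)
      = ∑ i ∈ Finset.range (m+1), (((m:ℝ)+2)*x)^i := by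
  set u : ℝ := x⁻¹ with hu
  have hxu : x * u = 1 := mul_inv_cancel₀ hx
  set y : ℝ := u - ((m:ℝ)+2) with hy
  have hy0 : y ≠ 0 := by
    intro h
    apply hNx
    have : u = (m:ℝ)+2 := by rw [hy] at h; linarith
    rw [← this, mul_comm]
    exact hxu
  -- Step A: LHS = x^m * S
  have stepA : ∀ k ∈ Finset.range (m+1),
      (((m+1).choose k : ℕ):ℝ) * (((k:ℝ)+1)*x)^k * (1 - ((k:ℝ)+1)*x)^(m-k)
      = x^m * ((((m+1).choose k : ℕ):ℝ) * ((k:ℝ)+1)^k * (y + (((m:ℝ)+1) - k))^(m-k)) := by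
    intro k hk
    have hk' := Finset.mem_range.mp hk
    have h1 : 1 - ((k:ℝ)+1)*x = x * (y + (((m:ℝ)+1) - k)) := by
      have : y + (((m:ℝ)+1) - k) = u - ((k:ℝ)+1) := by rw [hy]; ring
      rw [this, mul_sub, hxu]
      ring
    rw [h1, mul_pow, mul_pow]
    have h2 : x^k * x^(m-k) = x^m := by
      rw [← pow_add]
      congr 1
      omega
    calc (((m+1).choose k : ℕ):ℝ) * (((k:ℝ)+1)^k * x^k)
          * (x^(m-k) * (y + (((m:ℝ)+1) - k))^(m-k))
        = (x^k * x^(m-k)) * ((((m+1).choose k : ℕ):ℝ) * ((k:ℝ)+1)^k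
            * (y + (((m:ℝ)+1) - k))^(m-k)) := by ring
      _ = x^m * ((((m+1).choose k : ℕ):ℝ) * ((k:ℝ)+1)^k * (y + (((m:ℝ)+1) - k))^(m-k)) := by
          rw [h2]
  -- Step B: RHS = x^m * R
  have stepB : ∀ i ∈ Finset.range (m+1),
      (((m:ℝ)+2)*x)^i = x^m * (((m:ℝ)+2)^i * (y + ((m:ℝ)+2))^(m-i)) := by
    intro i hi
    have hi' := Finset.mem_range.mp hi
    have h1 : y + ((m:ℝ)+2) = u := by rw [hy]; ring
    have h2 : x^m = x^i * x^(m-i) := by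
      rw [← pow_add]
      congr 1
      omega
    rw [h1, mul_pow, h2]
    calc ((m:ℝ)+2)^i * x^i = (((m:ℝ)+2)^i * (x^i * (x*u)^(m-i))) := by rw [hxu]; ring
      _ = x^i * x^(m-i) * (((m:ℝ)+2)^i * u^(m-i)) := by rw [mul_pow]; ring
  rw [Finset.sum_congr rfl stepA, Finset.sum_congr rfl stepB,
    ← Finset.mul_sum, ← Finset.mul_sum]
  congr 1
  -- now S = R
  apply mul_left_cancel₀ hy0
  -- y * S = eval y (Upoly (m+1)) - (m+2)^(m+1) - (m+1) * eval (y+1) (Upoly m)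
  have hyS : y * (∑ k ∈ Finset.range (m+1),
        (((m+1).choose k : ℕ):ℝ) * ((k:ℝ)+1)^k * (y + (((m:ℝ)+1) - k))^(m-k))
      = eval y (Upoly (m+1)) - ((m:ℝ)+2)^(m+1) - ((m:ℝ)+1) * eval (y+1) (Upoly m) := by
    have hU1 : eval y (Upoly (m+1))
        = (∑ k ∈ Finset.range (m+1), (((m+1).choose k : ℕ):ℝ) * ((k:ℝ)+1)^k
            * (y + ((((m+1):ℕ):ℝ) - k))^(m+1-k)) + ((m:ℝ)+2)^(m+1) := by
      unfold Upoly
      rw [eval_finset_sum]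
      simp only [eval_term]
      rw [Finset.sum_range_succ]
      congr 1
      rw [Nat.sub_self, Nat.choose_self, pow_zero, mul_one, Nat.cast_one, one_mul]
      push_cast
      ring
    have hU2 : eval (y+1) (Upoly m)
        = ∑ k ∈ Finset.range (m+1), ((m.choose k : ℕ):ℝ) * ((k:ℝ)+1)^k
            * ((y+1) + ((m:ℝ) - k))^(m-k) := by
      unfold Upoly
      rw [eval_finset_sum]
      simp only [eval_term]
    rw [hU1, hU2, Finset.mul_sum, Finset.mul_sum]
    have : ∀ k ∈ Finset.range (m+1),
        (((m+1).choose k : ℕ):ℝ) * ((k:ℝ)+1)^k * (y + ((((m+1):ℕ):ℝ) - k))^(m+1-k)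
          - ((m:ℝ)+1) * (((m.choose k : ℕ):ℝ) * ((k:ℝ)+1)^k * ((y+1) + ((m:ℝ) - k))^(m-k))
        = y * ((((m+1).choose k : ℕ):ℝ) * ((k:ℝ)+1)^k * (y + (((m:ℝ)+1) - k))^(m-k)) := by
      intro k hk
      have hk' := Finset.mem_range.mp hk
      have hb : y + ((((m+1):ℕ):ℝ) - k) = y + (((m:ℝ)+1) - k) := by push_cast; ring
      have hb2 : (y+1) + ((m:ℝ) - k) = y + (((m:ℝ)+1) - k) := by ring
      have he : m+1-k = (m-k)+1 := by omega
      have hnat : (m+1).choose k * (m+1-k) = (m+1) * m.choose k := by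
        rw [← Nat.choose_mul_succ_eq m k, Nat.mul_comm]
      have hR := congrArg (Nat.cast : ℕ → ℝ) hnat
      push_cast [Nat.cast_sub (by omega : k ≤ m + 1)] at hR
      rw [hb, hb2, he, pow_succ]
      have hyb : y + (((m:ℝ)+1) - k) = y + (((m:ℝ)+1) - k) := rfl
      -- expand: B^(e+1) = B^e * B ; B = y + (m+1-k)
      -- goal: c1 * B^e * B - (m+1) * (c2 * B^e) = y * (c1 * B^e)
      -- equivalent: c1 * B - (m+1)*c2 = y * c1  given B = y + (m+1) - k and c1*(m+1-k) = (m+1)*c2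
      linear_combination (((k:ℝ)+1)^k * (y + (((m:ℝ)+1) - k))^(m-k)) * hR
    rw [Finset.sum_congr rfl fun k hk => (this k hk).symm, Finset.sum_sub_distrib]
    ring
  -- y * R = (y+m+2)^(m+1) - (m+2)^(m+1)
  have hyR : y * (∑ i ∈ Finset.range (m+1), ((m:ℝ)+2)^i * (y + ((m:ℝ)+2))^(m-i))
      = (y + ((m:ℝ)+2))^(m+1) - ((m:ℝ)+2)^(m+1) := by
    have hrefl : (∑ i ∈ Finset.range (m+1), ((m:ℝ)+2)^i * (y + ((m:ℝ)+2))^(m-i))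
        = ∑ i ∈ Finset.range (m+1), (y + ((m:ℝ)+2))^i * ((m:ℝ)+2)^(m-i) := by
      rw [← Finset.sum_range_reflect
        (fun i => (y + ((m:ℝ)+2))^i * ((m:ℝ)+2)^(m-i)) (m+1)]
      refine Finset.sum_congr rfl fun i hi => ?_
      have hi' := Finset.mem_range.mp hi
      have h1 : m + 1 - 1 - i = m - i := by omega
      have h2 : m - (m - i) = i := by omega
      rw [h1, h2, mul_comm]
    rw [hrefl]
    have := geom_sum₂_mul (y + ((m:ℝ)+2)) ((m:ℝ)+2) (m+1)
    have hsub : (y + ((m:ℝ)+2)) - ((m:ℝ)+2) = y := by ring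
    have hexp : ∀ i, m + 1 - 1 - i = m - i := fun i => by omega
    simp only [hexp] at this
    rw [hsub] at this
    rw [mul_comm, this]
  rw [hyS, hyR, UeqV, UeqV, sub_right_comm, VV]

theorem abelian_polynomial_identity (N : ℕ) (hN : 2 ≤ N) :
    (∑ L ∈ Finset.Icc 1 (N - 1),
        (C ((N - 1).choose (L - 1) : ℝ)) * (C (L : ℝ) * X) ^ (L - 1) *
          (1 - C (L : ℝ) * X) ^ (N - L - 1)).degree ≤ ((N - 2 : ℕ) : WithBot ℕ) ∧
    (∑ i ∈ Finset.range (N - 1), (C (N : ℝ) * X) ^ i).degree ≤ ((N - 2 : ℕ) : WithBot ℕ) ∧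
    (∑ L ∈ Finset.Icc 1 (N - 1),
        (C ((N - 1).choose (L - 1) : ℝ)) * (C (L : ℝ) * X) ^ (L - 1) *
          (1 - C (L : ℝ) * X) ^ (N - L - 1)) =
      ∑ i ∈ Finset.range (N - 1), (C (N : ℝ) * X) ^ i := by
  obtain ⟨m, rfl⟩ : ∃ m, N = m + 2 := ⟨N - 2, by omega⟩
  have hPQ : (∑ L ∈ Finset.Icc 1 (m + 2 - 1),
        (C (((m + 2 - 1).choose (L - 1) : ℕ) : ℝ)) * (C (L : ℝ) * X) ^ (L - 1) *
          (1 - C (L : ℝ) * X) ^ (m + 2 - L - 1)) =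
      ∑ i ∈ Finset.range (m + 2 - 1), (C (((m+2:ℕ)) : ℝ) * X) ^ i := by
    apply Polynomial.eq_of_infinite_eval_eq
    apply Set.Infinite.mono (s := ({0, ((m:ℝ)+2)⁻¹} : Set ℝ)ᶜ)
    swap
    · exact Set.Finite.infinite_compl (Set.toFinite _)
    intro x hxmem
    simp only [Set.mem_compl_iff, Set.mem_insert_iff, Set.mem_singleton_iff, not_or] at hxmem
    obtain ⟨hx0, hxinv⟩ := hxmem
    have hNx : ((m:ℝ)+2) * x ≠ 1 := by
      intro h
      exact hxinv (eq_inv_of_mul_eq_one_left (by linarith [h] : x * ((m:ℝ)+2) = 1))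
    simp only [Set.mem_setOf_eq, eval_finset_sum, eval_mul, eval_pow, eval_sub, eval_one,
      eval_C, eval_X]
    have hIcc : Finset.Icc 1 (m + 2 - 1)
        = Finset.map ⟨Nat.succ, Nat.succ_injective⟩ (Finset.range (m + 1)) := by
      ext a
      simp only [Finset.mem_Icc, Finset.mem_map, Finset.mem_range, Function.Embedding.coeFn_mk]
      constructor
      · intro ⟨h1, h2⟩; exact ⟨a - 1, by omega, by omega⟩
      · rintro ⟨b, hb, rfl⟩; omega
    rw [hIcc, Finset.sum_map]
    simp only [Function.Embedding.coeFn_mk, Nat.add_sub_cancel]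
    have := main_eval m x hx0 hNx
    calc ∑ k ∈ Finset.range (m + 1),
          (((m + 2 - 1).choose k : ℕ) : ℝ) * (((k+1:ℕ):ℝ) * x) ^ k
            * (1 - ((k+1:ℕ):ℝ) * x) ^ (m + 2 - (k + 1) - 1)
        = ∑ k ∈ Finset.range (m + 1),
          (((m+1).choose k : ℕ):ℝ) * (((k:ℝ)+1)*x)^k * (1 - ((k:ℝ)+1)*x)^(m-k) := by
          refine Finset.sum_congr rfl fun k hk => ?_
          have h1 : m + 2 - 1 = m + 1 := by omega
          have h2 : m + 2 - (k+1) - 1 = m - k := by omega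
          rw [h1, h2]
          push_cast
          ring
      _ = ∑ i ∈ Finset.range (m + 1), (((m:ℝ)+2)*x)^i := this
      _ = ∑ i ∈ Finset.range (m + 2 - 1), ((((m+2:ℕ)):ℝ) * x)^i := by
          refine Finset.sum_congr (by congr 1) fun i hi => ?_
          push_cast
          ring
  have hQdeg : (∑ i ∈ Finset.range (m + 2 - 1), (C (((m+2:ℕ)) : ℝ) * X) ^ i).degree
      ≤ ((m + 2 - 2 : ℕ) : WithBot ℕ) := by
    refine le_trans (Polynomial.degree_sum_le _ _) ?_
    apply Finset.sup_le
    intro i hi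
    have hi' := Finset.mem_range.mp hi
    have h1 : (C (((m+2:ℕ)) : ℝ) * X) ^ i = C ((((m+2:ℕ)) : ℝ)^i) * X ^ i := by
      rw [mul_pow, ← C_pow]
    rw [h1]
    refine le_trans (Polynomial.degree_C_mul_X_pow_le i _) ?_
    have h2 : i ≤ m + 2 - 2 := by omega
    exact_mod_cast h2
  exact ⟨hPQ ▸ hQdeg, hQdeg, hPQ⟩
end

section
/- For every integer N ≥ 1 and real x, the polynomial identity (1-Nx)·∑_{L=1}^{N-1} binom(N-1,L-1)·(Lx)^{L-1}·(1-Lx)^{N-L-1} + (Nx)^{N-1} = 1 holds, equivalently ∑_{L=1}^{N-1} binom(N-1,L-1)·(Lx)^{L-1}·(1-Lx)^{N-L-1} = (1-(Nx)^{N-1})/(1-Nx) = ∑_{i=0}^{N-2}(Nx)^i. -/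
open Finset


private def Fs (z : ℝ) (n : ℕ) (x y : ℝ) : ℝ :=
  ∑ k ∈ range (n+1), (n.choose k : ℝ) * (x + k*z)^k * (y - k*z)^(n-k)

private def Es (z : ℝ) (n : ℕ) (x y : ℝ) : ℝ :=
  ∑ k ∈ range (n+1), (n.choose k : ℝ) * (x + k*z)^(k+1) * (y - k*z)^(n-k)

private def Ts (z : ℝ) (n : ℕ) (x y : ℝ) : ℝ :=
  ∑ k ∈ range n, (n.choose k : ℝ) * (x + k*z)^k * (y - k*z)^(n-1-k)

private lemma pascal_split (n : ℕ) (a : ℕ → ℝ) :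
    ∑ k ∈ range (n+2), ((n+1).choose k : ℝ) * a k
      = ∑ k ∈ range (n+1), (n.choose k : ℝ) * a k
        + ∑ k ∈ range (n+1), (n.choose k : ℝ) * a (k+1) := by
  rw [Finset.sum_range_succ' (fun k => ((n+1).choose k : ℝ) * a k) (n+1)]
  have h : ∀ k ∈ range (n+1), ((n+1).choose (k+1) : ℝ) * a (k+1)
      = (n.choose k : ℝ) * a (k+1) + (n.choose (k+1) : ℝ) * a (k+1) := by
    intro k _
    rw [Nat.choose_succ_succ]
    push_cast
    ring
  rw [Finset.sum_congr rfl h, Finset.sum_add_distrib]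
  have h2 : ∑ k ∈ range (n+1), (n.choose (k+1) : ℝ) * a (k+1)
      + ((n+1).choose 0 : ℝ) * a 0
      = ∑ k ∈ range (n+1), (n.choose k : ℝ) * a k := by
    have h3 := Finset.sum_range_succ' (fun k => (n.choose k : ℝ) * a k) (n+1)
    have h4 := Finset.sum_range_succ (fun k => (n.choose k : ℝ) * a k) (n+1)
    simp only [Nat.choose_succ_self, Nat.cast_zero, zero_mul, add_zero] at h4
    simp only [Nat.choose_zero_right, Nat.cast_one, one_mul] at h3 ⊢
    rw [← h4, h3]
  linarith [h2]

private lemma Fs_rec (z : ℝ) (n : ℕ) (x y : ℝ) :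
    Fs z (n+1) x y = (x+y) * Fs z n x y + Es z n (x+z) (y-z) - Es z n x y := by
  have : Fs z (n+1) x y
      = ∑ k ∈ range (n+2), ((n+1).choose k : ℝ) * ((x + k*z)^k * (y - k*z)^(n+1-k)) := by
    unfold Fs; apply Finset.sum_congr rfl; intro k _; ring
  rw [this, pascal_split]
  have h1 : ∑ k ∈ range (n+1), (n.choose k : ℝ) * ((x + k*z)^k * (y - k*z)^(n+1-k))
      = (x+y) * Fs z n x y - Es z n x y := by
    unfold Fs Es
    rw [Finset.mul_sum, ← Finset.sum_sub_distrib]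
    apply Finset.sum_congr rfl
    intro k hk
    have hk' : k ≤ n := by simpa using Nat.lt_succ_iff.mp (Finset.mem_range.mp hk)
    rw [show n+1-k = (n-k)+1 by omega, pow_succ, pow_succ]
    ring
  have h2 : ∑ k ∈ range (n+1), (n.choose k : ℝ) * ((x + (k+1:ℕ)*z)^(k+1) * (y - (k+1:ℕ)*z)^(n+1-(k+1)))
      = Es z n (x+z) (y-z) := by
    unfold Es
    apply Finset.sum_congr rfl
    intro k _
    rw [show n+1-(k+1) = n-k by omega,
        show x + ((k+1:ℕ):ℝ)*z = (x+z) + k*z by push_cast; ring,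
        show y - ((k+1:ℕ):ℝ)*z = (y-z) - k*z by push_cast; ring]
    ring
  rw [h1, h2]
  ring

private lemma Es_rec (z : ℝ) (n : ℕ) (x y : ℝ) :
    Es z (n+1) x y = x * Fs z (n+1) x y + ((n:ℝ)+1)*z * Es z n (x+z) (y-z) := by
  have key : ∀ k ∈ range (n+2), ((n+1).choose k : ℝ) * (x + k*z)^(k+1) * (y - k*z)^(n+1-k)
      = x * (((n+1).choose k : ℝ) * (x + k*z)^k * (y - k*z)^(n+1-k))
        + z * ((k:ℝ) * ((n+1).choose k : ℝ) * ((x + k*z)^k * (y - k*z)^(n+1-k))) := by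
    intro k _
    rw [pow_succ]
    ring
  unfold Es
  rw [Finset.sum_congr rfl key, Finset.sum_add_distrib, ← Finset.mul_sum, ← Finset.mul_sum]
  have h2 : ∑ k ∈ range (n+2), ((k:ℝ) * ((n+1).choose k : ℝ) * ((x + k*z)^k * (y - k*z)^(n+1-k)))
      = ((n:ℝ)+1) * Es z n (x+z) (y-z) := by
    rw [Finset.sum_range_succ' (fun k => ((k:ℝ) * ((n+1).choose k : ℝ) * ((x + k*z)^k * (y - k*z)^(n+1-k)))) (n+1)]
    simp only [Nat.cast_zero, zero_mul, add_zero]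
    unfold Es
    rw [Finset.mul_sum]
    apply Finset.sum_congr rfl
    intro k _
    have hch : ((k:ℝ)+1) * (((n+1).choose (k+1) : ℕ) : ℝ) = ((n:ℝ)+1) * ((n.choose k : ℕ) : ℝ) := by
      have := Nat.add_one_mul_choose_eq n k
      have : ((n.succ * n.choose k : ℕ) : ℝ) = (((n.succ).choose (k.succ) * k.succ : ℕ) : ℝ) := by
        exact_mod_cast congrArg (fun m => ((m:ℕ):ℝ)) this
      push_cast at this
      linarith [this]
    rw [show n+1-(k+1) = n-k by omega,
        show x + ((k+1:ℕ):ℝ)*z = (x+z) + k*z by push_cast; ring,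
        show y - ((k+1:ℕ):ℝ)*z = (y-z) - k*z by push_cast; ring]
    push_cast
    linear_combination ((x+z+(k:ℝ)*z)^(k+1) * (y-z-(k:ℝ)*z)^(n-k)) * hch
  rw [h2]
  unfold Fs Es
  ring

private lemma Ts_rec (z : ℝ) (n : ℕ) (x y : ℝ) :
    Ts z (n+1) x y = Fs z n x y + (x+y) * Ts z n (x+z) (y-z)
      - Fs z n (x+z) (y-z) + (x + ((n:ℝ)+1)*z)^n := by
  have e1 : Ts z (n+1) x y
      = ∑ k ∈ range (n+2), ((n+1).choose k : ℝ) * ((x + k*z)^k * (y - k*z)^(n-k))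
        - (x + ((n:ℝ)+1)*z)^(n+1) := by
    rw [Finset.sum_range_succ (fun k => ((n+1).choose k : ℝ) * ((x + k*z)^k * (y - k*z)^(n-k))) (n+1)]
    simp only [Nat.choose_self, Nat.cast_one, one_mul,
      show n - (n+1) = 0 by omega, pow_zero, mul_one]
    unfold Ts
    have : ∀ k ∈ range (n+1), ((n+1).choose k : ℝ) * (x + k*z)^k * (y - k*z)^(n+1-1-k)
        = ((n+1).choose k : ℝ) * ((x + k*z)^k * (y - k*z)^(n-k)) := by
      intro k _
      rw [show n+1-1-k = n-k by omega]; ring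
    rw [Finset.sum_congr rfl this]
    push_cast
    ring
  rw [e1, pascal_split]
  have e2 : ∑ k ∈ range (n+1), (n.choose k : ℝ) * ((x + k*z)^k * (y - k*z)^(n-k))
      = Fs z n x y := by
    unfold Fs; apply Finset.sum_congr rfl; intro k _; ring
  have e3 : ∑ k ∈ range (n+1), (n.choose k : ℝ) * ((x + (k+1:ℕ)*z)^(k+1) * (y - (k+1:ℕ)*z)^(n-(k+1)))
      = ∑ k ∈ range n, (n.choose k : ℝ) * (((x+z) + k*z)^(k+1) * ((y-z) - k*z)^(n-1-k))
        + (x + ((n:ℝ)+1)*z)^(n+1) := by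
    rw [Finset.sum_range_succ (fun k => (n.choose k : ℝ) * ((x + (k+1:ℕ)*z)^(k+1) * (y - (k+1:ℕ)*z)^(n-(k+1)))) n]
    simp only [Nat.choose_self, Nat.cast_one, one_mul, Nat.sub_self,
      show n - (n+1) = 0 by omega, pow_zero, mul_one]
    congr 1
    · apply Finset.sum_congr rfl
      intro k _
      rw [show n-(k+1) = n-1-k by omega,
          show x + ((k+1:ℕ):ℝ)*z = (x+z) + k*z by push_cast; ring,
          show y - ((k+1:ℕ):ℝ)*z = (y-z) - k*z by push_cast; ring]
    · push_cast; ring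
  have e4 : ∑ k ∈ range n, (n.choose k : ℝ) * (((x+z) + k*z)^(k+1) * ((y-z) - k*z)^(n-1-k))
      = (x+y) * Ts z n (x+z) (y-z)
        - (Fs z n (x+z) (y-z) - (x + ((n:ℝ)+1)*z)^n) := by
    have e5 : ∑ k ∈ range n, (n.choose k : ℝ) * (((x+z) + k*z)^(k+1) * ((y-z) - k*z)^(n-1-k))
        = ∑ k ∈ range n, ((x+y) * ((n.choose k : ℝ) * ((x+z) + k*z)^k * ((y-z) - k*z)^(n-1-k))
            - (n.choose k : ℝ) * ((x+z) + k*z)^k * ((y-z) - k*z)^(n-k)) := by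
      apply Finset.sum_congr rfl
      intro k hk
      have hk' : k < n := Finset.mem_range.mp hk
      rw [show n-k = (n-1-k)+1 by omega, pow_succ, pow_succ]
      ring
    have e6 : ∑ k ∈ range n, (n.choose k : ℝ) * ((x+z) + k*z)^k * ((y-z) - k*z)^(n-k)
        = Fs z n (x+z) (y-z) - (x + ((n:ℝ)+1)*z)^n := by
      unfold Fs
      rw [Finset.sum_range_succ]
      simp only [Nat.choose_self, Nat.cast_one, one_mul, Nat.sub_self, pow_zero, mul_one]
      rw [show x + ((n:ℝ)+1)*z = x+z+(n:ℝ)*z by ring]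
      ring
    rw [e5, Finset.sum_sub_distrib, ← Finset.mul_sum, e6]
    unfold Ts
    ring
  rw [e2, e3, e4]
  ring

private lemma FE_shift (z : ℝ) (n : ℕ) :
    (∀ x y : ℝ, Fs z n (x+z) (y-z) = Fs z n x y)
    ∧ (∀ x y : ℝ, Es z n (x+z+z) (y-z-z) - Es z n (x+z) (y-z)
        = Es z n (x+z) (y-z) - Es z n x y) := by
  induction n with
  | zero =>
    constructor
    · intro x y; simp [Fs]
    · intro x y; simp [Es]
  | succ n ih =>
    obtain ⟨ihF, ihD⟩ := ih
    have hF : ∀ x y : ℝ, Fs z (n+1) (x+z) (y-z) = Fs z (n+1) x y := by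
      intro x y
      rw [Fs_rec z n (x+z) (y-z), Fs_rec z n x y, ihF x y]
      linear_combination ihD x y
    have hD : ∀ x y : ℝ, Es z (n+1) (x+z) (y-z) - Es z (n+1) x y
        = z * Fs z (n+1) x y + ((n:ℝ)+1)*z * (Es z n (x+z) (y-z) - Es z n x y) := by
      intro x y
      rw [Es_rec z n (x+z) (y-z), Es_rec z n x y, hF x y]
      linear_combination ((n:ℝ)+1)*z*(ihD x y)
    refine ⟨hF, fun x y => ?_⟩
    have h1 := hD (x+z) (y-z)
    rw [show x+z+z = (x+z)+z by ring, show y-z-z = (y-z)-z by ring, h1,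
      hD x y, hF x y]
    linear_combination ((n:ℝ)+1)*z*(ihD x y)

private lemma Ts_ones (z : ℝ) (n : ℕ) :
    ∀ x y : ℝ, x + y = 1 → Ts z n x y = ∑ i ∈ range n, (x + (n:ℝ)*z)^i := by
  induction n with
  | zero => intro x y _; simp [Ts]
  | succ n ih =>
    intro x y hxy
    rw [Ts_rec, (FE_shift z n).1 x y, ih (x+z) (y-z) (by linarith), hxy]
    rw [Finset.sum_range_succ]
    have harg : x+z+(n:ℝ)*z = x + ((n:ℝ)+1)*z := by ring
    rw [harg, show ((n+1:ℕ):ℝ) = (n:ℝ)+1 by push_cast; ring]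
    ring


theorem abelian_expectation_polynomial_identity (N : ℕ) (hN : 1 ≤ N) (x : ℝ) :
    (1 - N * x) * (∑ L ∈ Finset.Icc 1 (N - 1),
        ((N - 1).choose (L - 1) : ℝ) * (L * x) ^ (L - 1) * (1 - L * x) ^ (N - L - 1)) +
      (N * x) ^ (N - 1) = 1 ∧
    ∑ L ∈ Finset.Icc 1 (N - 1),
        ((N - 1).choose (L - 1) : ℝ) * (L * x) ^ (L - 1) * (1 - L * x) ^ (N - L - 1) =
      ∑ i ∈ Finset.range (N - 1), (N * x) ^ i := by
  have hS : ∑ L ∈ Finset.Icc 1 (N - 1),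
        ((N - 1).choose (L - 1) : ℝ) * (L * x) ^ (L - 1) * (1 - L * x) ^ (N - L - 1)
      = Ts x (N-1) x (1-x) := by
    rw [show Finset.Icc 1 (N-1) = Finset.Ico 1 N by
          ext a; simp only [Finset.mem_Icc, Finset.mem_Ico]; omega,
        Finset.sum_Ico_eq_sum_range, Ts]
    apply Finset.sum_congr rfl
    intro k hk
    have hk' : k < N - 1 := Finset.mem_range.mp hk
    rw [show 1 + k - 1 = k by omega, show N - (1+k) - 1 = N-1-1-k by omega,
        show ((1+k:ℕ):ℝ) * x = x + (k:ℕ)*x by push_cast; ring,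
        show (1:ℝ) - (x + (k:ℕ)*x) = (1-x) - (k:ℕ)*x by ring]
  have hgeom : Ts x (N-1) x (1-x) = ∑ i ∈ Finset.range (N - 1), ((N:ℝ) * x) ^ i := by
    rw [Ts_ones x (N-1) x (1-x) (by ring)]
    apply Finset.sum_congr rfl
    intro i _
    rw [show x + (((N-1:ℕ)):ℝ)*x = (N:ℝ)*x by
      rw [Nat.cast_sub hN]; push_cast; ring]
  constructor
  · rw [hS, hgeom]
    linear_combination -geom_sum_mul ((N:ℝ)*x) (N-1)
  · rw [hS, hgeom]
end

section
/- Abel's binomial identity: for all real x, y, z and every natural number n, (x+y)^n = ∑_{i=0}^{n} binom(n,i) · x · (x - i z)^{i-1} · (y + i z)^{n-i}, provided x ≠ i z for all 0 ≤ i ≤ n so that the negative power (x-iz)^{i-1} is defined for i = 0 (where (x-0·z)^{-1}·x = 1 after combining with the leading factor x). -/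
/-!
Write `S n y = ∑ₖ C(n,k) cₖ (y + k z)^(n-k)` with `c₀ = 1` and `cₖ = x (x - k z)^(k-1)`.
Differentiating in `y` gives `S' (n+1) = (n+1) S n`, so by induction `S n y - (x + y)^n` is
constant in `y`. At `y = -x` every term collapses to `x (-1)^(n-k) C(n,k) (x - k z)^(n-1)`, and
their sum is the `n`-th forward difference of a polynomial of degree `n - 1`, which vanishes.
-/

open Finset

def shiftedBinomialSum {R : Type*} [CommRing R] (c d : ℕ → R) (n : ℕ) (y : R) : R :=
  ∑ k ∈ range (n + 1), (n.choose k : R) * c k * (y + d k) ^ (n - k)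

section Derivative

variable {𝕜 : Type*} [RCLike 𝕜]

theorem hasDerivAt_shiftedBinomialSum_succ (c d : ℕ → 𝕜) (n : ℕ) (y : 𝕜) :
    HasDerivAt (shiftedBinomialSum c d (n + 1)) ((n + 1) * shiftedBinomialSum c d n y) y := by
  have hterm : ∀ k ∈ range (n + 2), HasDerivAt
      (fun y ↦ ((n + 1).choose k : 𝕜) * c k * (y + d k) ^ (n + 1 - k))
      (((n + 1).choose k : 𝕜) * c k * ((n + 1 - k : ℕ) * (y + d k) ^ (n - k))) y := by
    intro k _
    have := ((hasDerivAt_id y).add_const (d k)).pow (n + 1 - k)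
    simpa [Nat.sub_sub, add_comm 1 n] using this.const_mul (((n + 1).choose k : 𝕜) * c k)
  refine (HasDerivAt.fun_sum hterm).congr_deriv ?_
  rw [sum_range_succ, Nat.sub_self, Nat.cast_zero, zero_mul, mul_zero, add_zero,
    shiftedBinomialSum, mul_sum]
  refine sum_congr rfl fun k _ ↦ ?_
  have hcoef : ((n + 1).choose k : 𝕜) * (n + 1 - k : ℕ) = (n + 1) * n.choose k := by
    exact_mod_cast (Nat.choose_mul_succ_eq n k).symm.trans (mul_comm _ _)
  linear_combination c k * (y + d k) ^ (n - k) * hcoef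

theorem shiftedBinomialSum_eq_add_pow (c d : ℕ → 𝕜) (x : 𝕜) (hc : c 0 = 1)
    (hroot : ∀ n, 0 < n → shiftedBinomialSum c d n (-x) = 0) (n : ℕ) (y : 𝕜) :
    shiftedBinomialSum c d n y = (x + y) ^ n := by
  induction n generalizing y with
  | zero => simp [shiftedBinomialSum, hc]
  | succ n ih =>
    have hderiv (t : 𝕜) :
        HasDerivAt (fun t ↦ shiftedBinomialSum c d (n + 1) t - (x + t) ^ (n + 1)) 0 t := by
      refine ((hasDerivAt_shiftedBinomialSum_succ c d n t).fun_sub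
        (((hasDerivAt_id' t).const_add x).pow (n + 1))).congr_deriv ?_
      rw [ih, Nat.add_sub_cancel]
      push_cast
      ring
    have hconst := is_const_of_deriv_eq_zero (fun t ↦ (hderiv t).differentiableAt)
      (fun t ↦ (hderiv t).deriv) y (-x)
    simpa [hroot (n + 1) n.succ_pos, sub_eq_zero] using hconst

end Derivative

theorem sum_range_choose_mul_sub_mul_pow_eq_zero {R : Type*} [CommRing R] (x z : R) {m n : ℕ}
    (hmn : m < n) :
    ∑ k ∈ range (n + 1), (-1) ^ (n - k) * (n.choose k : R) * (x - k * z) ^ m = 0 := by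
  have hdeg : ((Polynomial.C x - Polynomial.C z * Polynomial.X) ^ m).natDegree < n := by
    refine lt_of_le_of_lt (Polynomial.natDegree_pow_le_of_le m ?_) (by rwa [mul_one])
    compute_degree!
  have := congr_fun (Polynomial.fwdDiff_iter_eq_zero_of_degree_lt hdeg) 0
  rw [fwdDiff_iter_eq_sum_shift] at this
  simpa [mul_comm z] using this

/-- `x (x - k z)^(k-1)`, with the value `1` at `k = 0` that `x * x ^ (-1 : ℤ)` has for `x ≠ 0`. -/
def abelCoeff {R : Type*} [CommRing R] (x z : R) : ℕ → R
  | 0 => 1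
  | k + 1 => x * (x - (k + 1 : ℕ) * z) ^ k

theorem mul_zpow_sub_one_eq_abelCoeff {K : Type*} [Field K] {x : K} (z : K) (hx : x ≠ 0)
    (i : ℕ) : x * (x - i * z) ^ ((i : ℤ) - 1) = abelCoeff x z i := by
  cases i with
  | zero => simp [abelCoeff, hx]
  | succ k => simp [abelCoeff]

theorem abelCoeff_mul_neg_add_pow {R : Type*} [CommRing R] (x z : R) {n k : ℕ} (hn : 0 < n)
    (hk : k ≤ n) :
    abelCoeff x z k * (-x + k * z) ^ (n - k) = x * ((-1) ^ (n - k) * (x - k * z) ^ (n - 1)) := by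
  cases k with
  | zero =>
    obtain ⟨m, rfl⟩ := Nat.exists_eq_add_one_of_ne_zero hn.ne'
    simp only [abelCoeff, Nat.cast_zero, zero_mul, add_zero, sub_zero, Nat.sub_zero,
      Nat.add_sub_cancel]
    ring
  | succ k =>
    rw [abelCoeff, show -x + (k + 1 : ℕ) * z = -1 * (x - (k + 1 : ℕ) * z) by ring, mul_pow,
      show n - 1 = k + (n - (k + 1)) by omega, pow_add]
    ring

theorem shiftedBinomialSum_abelCoeff_neg {R : Type*} [CommRing R] (x z : R) {n : ℕ}
    (hn : 0 < n) : shiftedBinomialSum (abelCoeff x z) (fun k ↦ k * z) n (-x) = 0 :=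
  calc _ = x * ∑ k ∈ range (n + 1), (-1) ^ (n - k) * (n.choose k : R) * (x - k * z) ^ (n - 1) := by
        rw [shiftedBinomialSum, mul_sum]
        refine sum_congr rfl fun k hk ↦ ?_
        rw [mul_assoc, abelCoeff_mul_neg_add_pow x z hn (Nat.lt_succ_iff.mp (mem_range.mp hk))]
        ring
    _ = 0 := by
        rw [sum_range_choose_mul_sub_mul_pow_eq_zero x z (Nat.sub_lt hn one_pos), mul_zero]

theorem abel_binomial_identity (x y z : ℝ) (n : ℕ) (h : ∀ i : ℕ, i ≤ n → x ≠ i * z) :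
    (x + y) ^ n =
      ∑ i ∈ Finset.range (n + 1),
        (n.choose i : ℝ) * x * (x - i * z) ^ ((i : ℤ) - 1) * (y + i * z) ^ (n - i) := by
  have hx : x ≠ 0 := by simpa using h 0 n.zero_le
  rw [← shiftedBinomialSum_eq_add_pow (abelCoeff x z) (fun k ↦ k * z) x rfl
    (fun _ ↦ shiftedBinomialSum_abelCoeff_neg x z) n y, shiftedBinomialSum]
  refine sum_congr rfl fun i _ ↦ ?_
  rw [mul_assoc _ x, mul_zpow_sub_one_eq_abelCoeff z hx]
end
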